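/- arXiv:2404.01555 — 3 statements merged into one kernel-verified Lean document; each statement's English description precedes it below -/
import Mathlib

section
/- For n ≥ 2, the matrix n·E_n − J_n (identity times n minus the all-ones matrix, size n) over ℤ has Smith normal form diag(1, n, n, …, n, 0); that is, its elementary divisors are one 1, (n−2) copies of n, and one 0. -/
set_option linter.unreachableTactic false
set_option linter.unusedTactic false

open Matrix

/-- The all-ones matrix. -/
def Jmat (n : ℕ) : Matrix (Fin n) (Fin n) ℤ := Matrix.of fun _ _ => 1

/-- The diagonal vector `(1, n, n, …, n, 0)` of length `n`. -/
def snfDiag (n : ℕ) : Fin n → ℤ :=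
  fun i => if i.1 = 0 then 1 else if i.1 = n - 1 then 0 else (n : ℤ)

/-- The row-operations matrix. -/
def Umat (n : ℕ) : Matrix (Fin n) (Fin n) ℤ :=
  Matrix.of fun i j =>
    if j.1 = 0 then (if i.1 = 0 then -1 else (n : ℤ) - i.1)
    else if j.1 ≤ i.1 then 1 else 0

/-- The column-operations matrix. -/
def Vmat (n : ℕ) : Matrix (Fin n) (Fin n) ℤ :=
  Matrix.of fun i j =>
    if j.1 = n - 1 then 1
    else if j.1 = 0 then (if i.1 = 1 then 1 else 0)
    else if i.1 = j.1 then 1 else if i.1 = j.1 + 1 then -1 else 0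

/-- An explicit left inverse of `Vmat`. -/
def VmatInv (n : ℕ) : Matrix (Fin n) (Fin n) ℤ :=
  Matrix.of fun i k =>
    if k.1 = 0 then
      (if i.1 = 0 then -((n : ℤ) - 1) else if i.1 = n - 1 then 1 else (n : ℤ) - 1 - i.1)
    else if i.1 = 0 then 1 else if i.1 + 1 ≤ k.1 then -1 else 0

lemma sumPoint (n c : ℕ) (h : c < n) (f : ℕ → ℤ) :
    ∑ m ∈ Finset.range n, (if m = c then f m else 0) = f c := by
  rw [Finset.sum_ite_eq' (Finset.range n) c f]; simp [h]

lemma sumCount (n a b : ℕ) (c : ℤ) :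
    ∑ m ∈ Finset.range n, (if a ≤ m ∧ m < b then c else 0) = (min b n - a : ℕ) * c := by
  rw [Finset.sum_ite, Finset.sum_const, Finset.sum_const_zero, add_zero]
  have h : Finset.filter (fun m => a ≤ m ∧ m < b) (Finset.range n) = Finset.Ico a (min b n) := by
    ext m; simp only [Finset.mem_filter, Finset.mem_range, Finset.mem_Ico]; omega
  rw [h, Nat.card_Ico, nsmul_eq_mul]

lemma rowsumU (n : ℕ) (hn : 2 ≤ n) (i : Fin n) :
    ∑ k : Fin n, Umat n i k = if i.1 = 0 then (-1 : ℤ) else (n : ℤ) := by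
  simp only [Umat, Matrix.of_apply]
  rw [Fin.sum_univ_eq_sum_range
    (fun m => if m = 0 then (if i.1 = 0 then (-1 : ℤ) else (n : ℤ) - i.1)
      else if m ≤ i.1 then 1 else 0) n]
  have hi := i.2
  rcases Nat.eq_zero_or_pos i.1 with h0 | h0
  · rw [Finset.sum_congr rfl (fun m hm => show _ = if m = 0 then (-1 : ℤ) else 0 by
      simp only [Finset.mem_range] at hm; split_ifs <;> omega)]
    rw [sumPoint n 0 (by omega)]; simp [h0]
  · rw [Finset.sum_congr rfl (fun m hm => show _ =
        (if m = 0 then (n : ℤ) - i.1 - 1 else 0) + (if 0 ≤ m ∧ m < i.1 + 1 then 1 else 0) by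
      simp only [Finset.mem_range] at hm; split_ifs <;> omega)]
    rw [Finset.sum_add_distrib, sumPoint n 0 (by omega), sumCount]
    have h1 : i.1 ≠ 0 := by omega
    simp only [h1, if_false]
    omega

lemma rowsumVinv (n : ℕ) (hn : 2 ≤ n) (i : Fin n) :
    ∑ k : Fin n, VmatInv n i k = if i.1 = n - 1 then (1 : ℤ) else 0 := by
  simp only [VmatInv, Matrix.of_apply]
  rw [Fin.sum_univ_eq_sum_range
    (fun m => if m = 0 then
      (if i.1 = 0 then -((n : ℤ) - 1) else if i.1 = n - 1 then 1 else (n : ℤ) - 1 - i.1)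
      else if i.1 = 0 then 1 else if i.1 + 1 ≤ m then -1 else 0) n]
  have hi := i.2
  rcases Nat.eq_zero_or_pos i.1 with h0 | h0
  · rw [Finset.sum_congr rfl (fun m hm => show _ =
        (if m = 0 then -(n : ℤ) else 0) + (if 0 ≤ m ∧ m < n then 1 else 0) by
      simp only [Finset.mem_range] at hm; split_ifs <;> omega)]
    rw [Finset.sum_add_distrib, sumPoint n 0 (by omega), sumCount]
    have h1 : i.1 ≠ n - 1 := by omega
    simp only [h1, if_false]
    omega
  · rcases eq_or_ne i.1 (n - 1) with h1 | h1
    · rw [Finset.sum_congr rfl (fun m hm => show _ = (if m = 0 then (1 : ℤ) else 0) by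
        simp only [Finset.mem_range] at hm; split_ifs <;> omega)]
      rw [sumPoint n 0 (by omega)]
      simp [h1]
    · rw [Finset.sum_congr rfl (fun m hm => show _ =
          (if m = 0 then (n : ℤ) - 1 - i.1 else 0) + (if i.1 + 1 ≤ m ∧ m < n then -1 else 0) by
        simp only [Finset.mem_range] at hm; split_ifs <;> omega)]
      rw [Finset.sum_add_distrib, sumPoint n 0 (by omega), sumCount]
      simp only [h1, if_false]
      omega

/-- Multiplying on the right by `Vmat` picks out simple column combinations. -/
lemma mulVapply (n : ℕ) (hn : 2 ≤ n) (X : Matrix (Fin n) (Fin n) ℤ) (i j : Fin n) :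
    (X * Vmat n) i j =
      if h1 : j.1 = n - 1 then ∑ l, X i l
      else if j.1 = 0 then X i ⟨1, by omega⟩
      else X i j - X i ⟨j.1 + 1, by have := j.2; omega⟩ := by
  rw [Matrix.mul_apply]
  rcases eq_or_ne j.1 (n - 1) with h1 | h1
  · rw [dif_pos h1]
    refine Finset.sum_congr rfl fun l _ => ?_
    simp [Vmat, h1]
  · rw [dif_neg h1]
    rcases eq_or_ne j.1 0 with h0 | h0
    · rw [if_pos h0]
      rw [Finset.sum_congr rfl (fun l _ => show X i l * Vmat n l j
            = (if l = (⟨1, by omega⟩ : Fin n) then X i l else 0) by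
        simp only [Vmat, Matrix.of_apply, Fin.ext_iff]
        rw [if_neg h1, if_pos h0]
        split_ifs <;> first | ring1 | omega | (exfalso; omega) | simp_all)]
      rw [Finset.sum_ite_eq' _ _ _]
      simp
    · rw [if_neg h0]
      have hj2 : j.1 + 1 < n := by have := j.2; omega
      rw [Finset.sum_congr rfl (fun l _ => show X i l * Vmat n l j
            = (if l = j then X i l else 0)
              + (if l = (⟨j.1 + 1, hj2⟩ : Fin n) then -(X i l) else 0) by
        simp only [Vmat, Matrix.of_apply, Fin.ext_iff]
        rw [if_neg h1, if_neg h0]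
        split_ifs <;> first | ring1 | omega | (exfalso; omega) | simp_all)]
      rw [Finset.sum_add_distrib, Finset.sum_ite_eq' _ _ _, Finset.sum_ite_eq' _ _ _]
      simp [sub_eq_add_neg]

lemma UmulJ (n : ℕ) (hn : 2 ≤ n) :
    Umat n * Jmat n = Matrix.of (fun i _ => if i.1 = 0 then (-1 : ℤ) else (n : ℤ)) := by
  ext i j
  rw [Matrix.mul_apply]
  simp only [Jmat, Matrix.of_apply, mul_one]
  exact rowsumU n hn i

/-- For `n ≥ 2`, the Smith normal form of `n·E_n − J_n` over `ℤ` is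
`diag(1, n, …, n, 0)`: there are invertible integer matrices `U`, `V` with
`U * (n·E_n − J_n) * V = diag(1, n, …, n, 0)`. -/
theorem stmt3 (n : ℕ) (hn : 2 ≤ n) :
    ∃ U V : Matrix (Fin n) (Fin n) ℤ, IsUnit U.det ∧ IsUnit V.det ∧
      U * ((n : ℤ) • (1 : Matrix (Fin n) (Fin n) ℤ) - Jmat n) * V =
        Matrix.diagonal (snfDiag n) := by
  have h0n : (0 : ℕ) < n := by omega
  refine ⟨Umat n, Vmat n, ?_, ?_, ?_⟩
  · -- U is lower triangular with diagonal (-1, 1, …, 1)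
    have htri : (Umat n).BlockTriangular OrderDual.toDual := by
      intro i j hij
      simp only [OrderDual.toDual_lt_toDual] at hij
      have hij' : (i : ℕ) < j := hij
      have hj : j.1 ≠ 0 := by omega
      have h2 : ¬ j.1 ≤ i.1 := by omega
      simp [Umat, hj, h2]
      exact hij
    rw [Matrix.det_of_lowerTriangular _ htri]
    rw [Finset.prod_eq_single (⟨0, h0n⟩ : Fin n)
      (fun b _ hb => by
        have hb' : b.1 ≠ 0 := fun h => hb (Fin.ext h)
        simp [Umat, hb'])
      (by simp)]
    have : Umat n ⟨0, h0n⟩ ⟨0, h0n⟩ = -1 := by simp [Umat]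
    rw [this]
    exact isUnit_one.neg
  · -- V has the explicit left inverse VmatInv
    refine Matrix.isUnit_det_of_left_inverse (B := VmatInv n) ?_
    ext i j
    rw [mulVapply n hn]
    have hi := i.2
    rcases eq_or_ne j.1 (n - 1) with h1 | h1
    · rw [dif_pos h1, rowsumVinv n hn i]
      have hij : (i = j) ↔ (i.1 = n - 1) := by
        rw [Fin.ext_iff, h1]
      simp only [Matrix.one_apply, hij]
    · rw [dif_neg h1]
      rcases eq_or_ne j.1 0 with h0 | h0
      · rw [if_pos h0]
        have hij : (i = j) ↔ (i.1 = 0) := by rw [Fin.ext_iff, h0]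
        simp only [VmatInv, Matrix.of_apply, Matrix.one_apply, hij]
        split_ifs <;> first | rfl | omega | contradiction | simp_all
      · rw [if_neg h0]
        have hij : (i = j) ↔ (i.1 = j.1) := Fin.ext_iff
        simp only [VmatInv, Matrix.of_apply, Matrix.one_apply, hij]
        split_ifs <;> first | rfl | omega | contradiction | simp_all
  · -- the product identity
    have key : Umat n * ((n : ℤ) • (1 : Matrix (Fin n) (Fin n) ℤ) - Jmat n)
        = (n : ℤ) • Umat n - Umat n * Jmat n := by
      rw [Matrix.mul_sub, Matrix.mul_smul, Matrix.mul_one]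
    rw [key, Matrix.sub_mul]
    ext i j
    have hi := i.2
    have hj := j.2
    simp only [Matrix.sub_apply]
    rw [Matrix.smul_mul, Matrix.smul_apply, mulVapply n hn, UmulJ n hn, mulVapply n hn]
    simp only [Matrix.of_apply, smul_eq_mul, Matrix.diagonal_apply, snfDiag]
    rcases eq_or_ne j.1 (n - 1) with h1 | h1
    · rw [dif_pos h1, dif_pos h1, rowsumU n hn i]
      have hsum : ∑ l : Fin n, (if i.1 = 0 then (-1 : ℤ) else (n : ℤ))
          = (n : ℤ) * (if i.1 = 0 then (-1 : ℤ) else (n : ℤ)) := by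
        rw [Finset.sum_const, Finset.card_univ, Fintype.card_fin, nsmul_eq_mul]
      rw [hsum]
      have hij : (i = j) ↔ (i.1 = n - 1) := by rw [Fin.ext_iff, h1]
      simp only [hij]
      split_ifs <;> first | ring1 | omega | contradiction
    · rw [dif_neg h1, dif_neg h1]
      rcases eq_or_ne j.1 0 with h0 | h0
      · rw [if_pos h0, if_pos h0]
        have hij : (i = j) ↔ (i.1 = 0) := by rw [Fin.ext_iff, h0]
        simp only [Umat, Matrix.of_apply, hij]
        split_ifs <;> first | ring1 | omega | contradiction | (exfalso; omega)
      · rw [if_neg h0, if_neg h0]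
        have hij : (i = j) ↔ (i.1 = j.1) := Fin.ext_iff
        simp only [Umat, Matrix.of_apply, hij]
        split_ifs <;> first | ring1 | omega | contradiction | (exfalso; omega)
end

section
/- For n ≥ 2, the cokernel of the ℤ-linear map given by the n×n matrix n·E_n − J_n is isomorphic to ℤ ⊕ (ℤ/nℤ)^(n−2). -/
/-!
`n E_n - J_n` is the Laplacian of the complete graph `K_n`. Its image consists of the vectors
with coordinate sum `0` whose coordinates are all congruent modulo `n`: if `y` is such a vector
and `b` any index, then `x i = (y i - y b) / n` is a preimage. Splitting off two indices `a` and `b`,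
the map `y ↦ (∑ y, (y k - y b mod n)_{k ≠ a, b})` onto `ℤ × (ℤ/nℤ)^(n-2)` is surjective, and its
kernel is exactly this image: the congruence at `a` is forced, since `∑ (y i - y b) ≡ ∑ y = 0 (mod n)`.
-/

open Matrix

def completeLaplacian (ι : Type*) [Fintype ι] [DecidableEq ι] : Matrix ι ι ℤ :=
  (Fintype.card ι : ℤ) • 1 - of fun _ _ => 1

variable {ι κ : Type*} [Fintype ι]

lemma completeLaplacian_fin (n : ℕ) :
    completeLaplacian (Fin n) = (n : ℤ) • (1 : Matrix (Fin n) (Fin n) ℤ) - Jmat n := by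
  rw [completeLaplacian, Fintype.card_fin, Jmat]

lemma completeLaplacian_mulVec [DecidableEq ι] (x : ι → ℤ) (i : ι) :
    (completeLaplacian ι *ᵥ x) i = Fintype.card ι * x i - ∑ j, x j := by
  rw [completeLaplacian, sub_mulVec, smul_mulVec, one_mulVec]
  simp [mulVec, dotProduct]

lemma eq_of_sum_eq_zero_of_forall_ne {c : ι → ZMod (Fintype.card ι)} (hc : ∑ i, c i = 0)
    {a b : ι} (h : ∀ i ≠ a, c i = c b) : c a = c b := by
  have hsingle : ∑ i, (c i - c b) = c a - c b :=
    Finset.sum_eq_single a (fun i _ hi => by rw [h i hi, sub_self]) (by simp)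
  have hzero : ∑ i, (c i - c b) = 0 := by
    rw [Finset.sum_sub_distrib, hc, Finset.sum_const, Finset.card_univ, nsmul_eq_mul,
      ZMod.natCast_self, zero_mul, sub_zero]
  exact sub_eq_zero.mp (hsingle ▸ hzero)

theorem mem_range_completeLaplacian_iff [DecidableEq ι] {y : ι → ℤ} (b : ι) :
    y ∈ LinearMap.range (mulVecLin (completeLaplacian ι)) ↔
      ∑ i, y i = 0 ∧ ∀ i, (y i : ZMod (Fintype.card ι)) = y b := by
  constructor
  · rintro ⟨x, rfl⟩
    simp only [mulVecLin_apply, completeLaplacian_mulVec]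
    refine ⟨?_, fun i => ?_⟩
    · rw [Finset.sum_sub_distrib, ← Finset.mul_sum, Finset.sum_const, Finset.card_univ,
        nsmul_eq_mul, sub_self]
    · push_cast
      rw [ZMod.natCast_self, zero_mul, zero_mul]
  · rintro ⟨hsum, hmod⟩
    set n := Fintype.card ι
    have hn : (n : ℤ) ≠ 0 := by exact_mod_cast (Fintype.card_pos_iff.mpr ⟨b⟩).ne'
    have hdvd (i : ι) : (n : ℤ) ∣ y i - y b :=
      (ZMod.intCast_eq_intCast_iff_dvd_sub _ _ n).mp (hmod i).symm
    have hx (i : ι) : (n : ℤ) * ((y i - y b) / n) = y i - y b := Int.mul_ediv_cancel' (hdvd i)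
    have hsx : ∑ i, (y i - y b) / n = -y b := by
      apply mul_left_cancel₀ hn
      rw [Finset.mul_sum, Finset.sum_congr rfl fun i _ => hx i, Finset.sum_sub_distrib, hsum,
        Finset.sum_const, Finset.card_univ, nsmul_eq_mul]
      ring
    refine ⟨fun i => (y i - y b) / n, funext fun j => ?_⟩
    rw [mulVecLin_apply, completeLaplacian_mulVec, hsx, hx]
    ring

def sumAndResidues (N : ℕ) (e : Fin 2 ⊕ κ ≃ ι) : (ι → ℤ) →ₗ[ℤ] ℤ × (κ → ZMod N) :=
  AddMonoidHom.toIntLinearMap <| AddMonoidHom.mk'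
    (fun y => (∑ i, y i, fun k => ((y (e (.inr k)) - y (e (.inl 1)) : ℤ) : ZMod N)))
    fun y z => by
      ext k
      · simp [Finset.sum_add_distrib]
      · simp only [Pi.add_apply, Prod.snd_add]
        push_cast
        ring

lemma sumAndResidues_surjective [Fintype κ] (N : ℕ) (e : Fin 2 ⊕ κ ≃ ι) :
    Function.Surjective (sumAndResidues N e) := by
  rintro ⟨t, z⟩
  choose w hw using fun k => ZMod.intCast_surjective (z k)
  refine ⟨fun i => Sum.elim ![t - ∑ k, w k, 0] w (e.symm i), ?_⟩
  simp [sumAndResidues, hw, ← e.sum_comp]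

theorem ker_sumAndResidues [DecidableEq ι] (e : Fin 2 ⊕ κ ≃ ι) :
    LinearMap.ker (sumAndResidues (Fintype.card ι) e) =
      LinearMap.range (mulVecLin (completeLaplacian ι)) := by
  ext y
  rw [mem_range_completeLaplacian_iff (e (.inl 1))]
  simp only [LinearMap.mem_ker, sumAndResidues, AddMonoidHom.coe_toIntLinearMap,
    AddMonoidHom.mk'_apply, Prod.mk_eq_zero, funext_iff, Pi.zero_apply, Int.cast_sub, sub_eq_zero]
  refine ⟨fun ⟨hsum, hres⟩ => ⟨hsum, fun i => ?_⟩, fun ⟨hsum, hres⟩ => ⟨hsum, fun k => hres _⟩⟩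
  have hcast : ∑ i, (y i : ZMod (Fintype.card ι)) = 0 := by rw [← Int.cast_sum, hsum, Int.cast_zero]
  have hne (i : ι) (hi : i ≠ e (.inl 0)) : (y i : ZMod (Fintype.card ι)) = y (e (.inl 1)) := by
    obtain ⟨(s | k), rfl⟩ := e.surjective i
    · fin_cases s
      · exact absurd rfl hi
      · rfl
    · exact hres k
  by_cases hi : i = e (.inl 0)
  · exact hi ▸ eq_of_sum_eq_zero_of_forall_ne hcast hne
  · exact hne i hi

/-- For `n ≥ 2`, the cokernel of the `ℤ`-linear map `ℤⁿ → ℤⁿ` given by the matrix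
`n·E_n − J_n` is isomorphic to `ℤ ⊕ (ℤ/nℤ)^(n−2)`. -/
theorem stmt4 (n : ℕ) (hn : 2 ≤ n) :
    Nonempty (((Fin n → ℤ) ⧸ LinearMap.range
        (Matrix.mulVecLin ((n : ℤ) • (1 : Matrix (Fin n) (Fin n) ℤ) - Jmat n)))
      ≃ₗ[ℤ] ℤ × (Fin (n - 2) → ZMod n)) := by
  let e : Fin 2 ⊕ Fin (n - 2) ≃ Fin n := finSumFinEquiv.trans (finCongr (by omega))
  have hker := ker_sumAndResidues e
  rw [Fintype.card_fin, completeLaplacian_fin] at hker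
  rw [← hker]
  exact ⟨LinearMap.quotKerEquivOfSurjective _ (sumAndResidues_surjective n e)⟩
end

section
/- For n ≥ 2, the corank (dimension of the kernel over ℚ) of the matrix A_n = [[−E_n, −X_nᵀ],[−X_n, −n·E_{n(n-1)/2}]] equals n − 1. -/
/-!
The lower-right block `-n • 1` of `A_n` is invertible, so the kernel of `A_n` is isomorphic to
the kernel of its Schur complement `-1 + n⁻¹ • XᵀX`. Since `XᵀX = n • 1 - J` is the Laplacian of
the complete graph (`J` the all-ones matrix), the Schur complement is the constant matrix
`-n⁻¹ • J`, whose kernel is the hyperplane of vectors with coordinate sum zero.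
-/

open Matrix

/-- Index type for the rows of `X n`: pairs `(i,j)` with `i < j` in `Fin n`. -/
abbrev PairIdx (n : ℕ) := {p : Fin n × Fin n // p.1 < p.2}

/-- The matrix `X n` over `ℚ` whose row indexed by `(i,j)` (with `i < j`) is `e i - e j`. -/
def XmatQ (n : ℕ) : Matrix (PairIdx n) (Fin n) ℚ :=
  Matrix.of fun p k => (if k = p.1.1 then 1 else 0) - (if k = p.1.2 then 1 else 0)

/-- The weighted incidence matrix `A n = [[−E, −Xᵀ],[−X, −n·E]]` over `ℚ`. -/
def AmatQ (n : ℕ) : Matrix (Fin n ⊕ PairIdx n) (Fin n ⊕ PairIdx n) ℚ :=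
  Matrix.fromBlocks (-1) (-(XmatQ n)ᵀ) (-(XmatQ n)) (-((n : ℚ) • 1))

theorem Fintype.two_nsmul_sum_lt_eq_sum_sum {ι M : Type*} [Fintype ι] [LinearOrder ι]
    [AddCommMonoid M] (f : ι → ι → M) (hsymm : ∀ i j, f i j = f j i) (hdiag : ∀ i, f i i = 0) :
    2 • ∑ p : {p : ι × ι // p.1 < p.2}, f p.1.1 p.1.2 = ∑ i, ∑ j, f i j := by
  have hsplit : ∀ p : ι × ι, f p.1 p.2 =
      (if p.1 < p.2 then f p.1 p.2 else 0) + (if p.2 < p.1 then f p.2 p.1 else 0) := by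
    rintro ⟨i, j⟩
    rcases lt_trichotomy i j with h | rfl | h
    · simp [h, h.not_gt]
    · simp [hdiag]
    · simp [h, h.not_gt, hsymm i j]
  have hswap : ∑ p : ι × ι, (if p.2 < p.1 then f p.2 p.1 else 0)
      = ∑ p : ι × ι, (if p.1 < p.2 then f p.1 p.2 else 0) :=
    Fintype.sum_equiv (Equiv.prodComm ι ι) _ _ fun _ => rfl
  rw [← Fintype.sum_prod_type', Fintype.sum_congr _ _ hsplit, Finset.sum_add_distrib, hswap,
    ← two_nsmul, ← Finset.sum_filter]
  exact congrArg _ (Finset.sum_subtype {p : ι × ι | p.1 < p.2} (fun _ => by simp)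
    fun p : ι × ι => f p.1 p.2).symm

theorem XmatQ_transpose_mul_self (n : ℕ) :
    (XmatQ n)ᵀ * XmatQ n = (n : ℚ) • 1 - of fun _ _ => 1 := by
  ext k l
  set F : Fin n → Fin n → ℚ := fun i j =>
    ((if k = i then 1 else 0) - if k = j then 1 else 0) *
      ((if l = i then 1 else 0) - if l = j then 1 else 0)
  have hpairs := Fintype.two_nsmul_sum_lt_eq_sum_sum F (fun i j => by ring) (fun i => by simp [F])
  have hfull : ∑ i, ∑ j, F i j = 2 * ((if k = l then (n : ℚ) else 0) - 1) := by
    split_ifs <;> simp [F, mul_sub, Finset.sum_sub_distrib, *] <;> ring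
  rw [hfull, nsmul_eq_mul, Nat.cast_ofNat] at hpairs
  simpa [mul_apply, XmatQ, one_apply] using mul_left_cancel₀ two_ne_zero hpairs

section SchurComplement

variable {K l m n : Type*} [Field K] [Fintype m] [Fintype n] [DecidableEq m] [DecidableEq n]

theorem Matrix.ker_mulVecLin_fromBlocks (A : Matrix l m K) (B : Matrix l n K) (C : Matrix n m K)
    {D E : Matrix n n K} (hE : E * D = 1) :
    LinearMap.ker (fromBlocks A B C D).mulVecLin =
      (LinearMap.ker (A - B * E * C).mulVecLin).map (fromRows 1 (-(E * C))).mulVecLin := by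
  have hE' : D * E = 1 := mul_eq_one_comm.mp hE
  have hbot : ∀ x y, C *ᵥ x + D *ᵥ y = 0 ↔ y = -(E * C) *ᵥ x := by
    refine fun x y => ⟨fun h => ?_, fun h => ?_⟩
    · calc y = E *ᵥ (D *ᵥ y) := by rw [mulVec_mulVec, hE, one_mulVec]
        _ = -(E * C) *ᵥ x := by
          rw [eq_neg_of_add_eq_zero_right h, mulVec_neg, mulVec_mulVec, neg_mulVec]
    · rw [h, neg_mulVec, mulVec_neg, mulVec_mulVec, ← Matrix.mul_assoc, hE', Matrix.one_mul,
        add_neg_cancel]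
  ext v
  obtain ⟨x, y, rfl⟩ : ∃ x y, v = Sum.elim x y := ⟨_, _, (Sum.elim_comp_inl_inr v).symm⟩
  simp only [LinearMap.mem_ker, Submodule.mem_map, mulVecLin_apply, fromBlocks_mulVec,
    fromRows_mulVec, Sum.elim_comp_inl, Sum.elim_comp_inr, one_mulVec, ← Sum.elim_zero_zero,
    Sum.elim_eq_iff, hbot]
  constructor
  · rintro ⟨htop, rfl⟩
    refine ⟨x, ?_, rfl, rfl⟩
    rwa [sub_mulVec, Matrix.mul_assoc, ← mulVec_mulVec, sub_eq_add_neg, ← mulVec_neg,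
      ← neg_mulVec]
  · rintro ⟨x, hx, rfl, rfl⟩
    refine ⟨?_, rfl⟩
    rwa [sub_mulVec, Matrix.mul_assoc, ← mulVec_mulVec, sub_eq_add_neg, ← mulVec_neg,
      ← neg_mulVec] at hx

theorem Matrix.finrank_ker_mulVecLin_fromBlocks (A : Matrix l m K) (B : Matrix l n K)
    (C : Matrix n m K) {D E : Matrix n n K} (hE : E * D = 1) :
    Module.finrank K (LinearMap.ker (fromBlocks A B C D).mulVecLin) =
      Module.finrank K (LinearMap.ker (A - B * E * C).mulVecLin) := by
  have hinj : Function.Injective (fromRows 1 (-(E * C))).mulVecLin := fun x x' h => by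
    ext i
    simpa using congrFun h (Sum.inl i)
  rw [ker_mulVecLin_fromBlocks A B C hE]
  exact (Submodule.equivMapOfInjective _ hinj _).finrank_eq.symm

end SchurComplement

theorem Matrix.finrank_ker_mulVecLin_of_const {K ι : Type*} [Field K] [Fintype ι] [Nonempty ι]
    {c : K} (hc : c ≠ 0) :
    Module.finrank K (LinearMap.ker (of fun _ _ : ι => c).mulVecLin) = Fintype.card ι - 1 := by
  let sum : Module.Dual K (ι → K) := ∑ i, LinearMap.proj i
  have hsum : ∀ x, sum x = ∑ i, x i := fun x => by simp [sum]
  have hker : LinearMap.ker (of fun _ _ : ι => c).mulVecLin = LinearMap.ker sum := by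
    ext x
    simp [hsum, funext_iff, mulVec, dotProduct, ← Finset.mul_sum, hc]
  have hne : sum ≠ 0 := by
    classical
    obtain ⟨i⟩ := ‹Nonempty ι›
    exact fun h => by simpa [hsum] using LinearMap.congr_fun h (Pi.single i 1)
  have := Module.Dual.finrank_ker_add_one_of_ne_zero hne
  rw [hker]
  simp only [Module.finrank_fintype_fun_eq_card] at this
  omega

/-- For `n ≥ 2`, the corank of `A n` over `ℚ` (the dimension of its kernel) equals `n − 1`. -/
theorem stmt8 (n : ℕ) (hn : 2 ≤ n) :
    Module.finrank ℚ (LinearMap.ker (Matrix.mulVecLin (AmatQ n))) = n - 1 := by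
  have hn0 : (n : ℚ) ≠ 0 := Nat.cast_ne_zero.mpr (by omega)
  have hinv : -((n : ℚ)⁻¹ • 1) * -((n : ℚ) • 1 : Matrix (PairIdx n) (PairIdx n) ℚ) = 1 := by
    simp [hn0]
  have hschur : -1 - -(XmatQ n)ᵀ * -((n : ℚ)⁻¹ • (1 : Matrix (PairIdx n) (PairIdx n) ℚ)) *
      -XmatQ n = of fun _ _ => -(n : ℚ)⁻¹ := by
    simp only [Matrix.mul_neg, Matrix.neg_mul, neg_neg, Matrix.mul_smul, Matrix.mul_one,
      Matrix.smul_mul, XmatQ_transpose_mul_self]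
    ext i j
    by_cases h : i = j
    · simp [one_apply, h]
      field_simp
      ring
    · simp [one_apply, h]
  have : Nonempty (Fin n) := ⟨⟨0, by omega⟩⟩
  rw [AmatQ, finrank_ker_mulVecLin_fromBlocks _ _ _ hinv, hschur,
    finrank_ker_mulVecLin_of_const (neg_ne_zero.mpr (inv_ne_zero hn0)), Fintype.card_fin]
end
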